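/- Every tail-biting path (s, a) ∈ TBP(σᵢ) can be constructed from the irreducible error events in IEE(σᵢ) via concatenation and cyclic shifting: there exist 0 ≤ k < N and a finite sequence of elements of IEE(σᵢ) whose concatenation (joining paths at their common endpoint σᵢ) equals the cyclic shift of (s, a) by k. (Theorem 2 of the paper.) -/

import Mathlib

/-- A finite path through the trellis: a length `len`, a state sequence
`st 0, …, st len`, and an output sequence `out 0, …, out (len - 1)`. -/
structure NPath (S A : Type*) where
  len : ℕ
  st : ℕ → S
  out : ℕ → A

/-- Concatenation of a path ending at some state with a path starting at that
state: state sequences are joined (dropping the repeated initial state of the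
second path) and output sequences are appended. -/
def pconcat {S A : Type*} (p q : NPath S A) : NPath S A where
  len := p.len + q.len
  st := fun i => if i < p.len then p.st i else q.st (i - p.len)
  out := fun i => if i < p.len then p.out i else q.out (i - p.len)

/-- Concatenation of the nonempty sequence of paths `p :: l`. -/
def concatAll {S A : Type*} (p : NPath S A) (l : List (NPath S A)) : NPath S A :=
  l.foldl pconcat p

/-- Two paths are equal as paths: same length, same states `0, …, len`, and
same outputs `0, …, len - 1`. -/
def PathEq {S A : Type*} (p q : NPath S A) : Prop :=
  p.len = q.len ∧ (∀ i ≤ p.len, p.st i = q.st i) ∧ ∀ i < p.len, p.out i = q.out i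

/-- `(s, a)` satisfies the trellis transition constraint for `L` steps. -/
def IsTrellisPath {S A : Type*} (E : Set (S × A × S)) (L : ℕ)
    (s : ℕ → S) (a : ℕ → A) : Prop :=
  ∀ i < L, (s i, a i, s (i + 1)) ∈ E

/-- `(s, a)` is a tail-biting path of length `N`. -/
def IsTBPath {S A : Type*} (E : Set (S × A × S)) (N : ℕ)
    (s : ℕ → S) (a : ℕ → A) : Prop :=
  IsTrellisPath E N s a ∧ s 0 = s N

/-- Cyclic shift by `k` of the state sequence: `s'_i = s_{(i+k) mod N}`. -/
def cycShiftS {S : Type*} (N k : ℕ) (s : ℕ → S) : ℕ → S :=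
  fun i => s ((i + k) % N)

/-- Cyclic shift by `k` of the output sequence: `a'_i = a_{(i+k) mod N}`. -/
def cycShiftA {A : Type*} (N k : ℕ) (a : ℕ → A) : ℕ → A :=
  fun i => a ((i + k) % N)

/-- `(s, a)` belongs to `TBP(σᵢ)`: it is a tail-biting path of length `N` that
traverses `σᵢ` and avoids `σ_0, …, σ_{i-1}`. -/
def InTBP {S A : Type*} {M : ℕ} (E : Set (S × A × S)) (σ : Fin M → S) (i : Fin M)
    (N : ℕ) (s : ℕ → S) (a : ℕ → A) : Prop :=
  IsTBPath E N s a ∧ (∃ j ≤ N, s j = σ i) ∧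
    ∀ j ≤ N, ∀ i' : Fin M, i' < i → s j ≠ σ i'

/-- `p` is an irreducible error event at `σᵢ` (of some length `1 ≤ j ≤ N`): it
satisfies the trellis constraint, starts and ends at `σᵢ`, and its interior
states avoid `σ_0, σ_1, …, σᵢ`. -/
def InIEE {S A : Type*} {M : ℕ} (E : Set (S × A × S)) (σ : Fin M → S) (i : Fin M)
    (N : ℕ) (p : NPath S A) : Prop :=
  1 ≤ p.len ∧ p.len ≤ N ∧
    (∀ l < p.len, (p.st l, p.out l, p.st (l + 1)) ∈ E) ∧
    p.st 0 = σ i ∧ p.st p.len = σ i ∧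
    ∀ j', 0 < j' → j' < p.len → ∀ i' : Fin M, i' ≤ i → p.st j' ≠ σ i'

/-!
Rotating a tail-biting path in `TBP(σᵢ)` so that it starts at one of its visits to `σᵢ` gives a
loop at `σᵢ` of length `N` that avoids `σ_0, …, σ_{i-1}`. Cutting this loop at each of its
returns to `σᵢ` yields pieces whose interior states also avoid `σᵢ`: irreducible error events.
-/

namespace NPath

variable {S A : Type*}

def take (p : NPath S A) (t : ℕ) : NPath S A := ⟨t, p.st, p.out⟩

def drop (p : NPath S A) (t : ℕ) : NPath S A :=
  ⟨p.len - t, fun j => p.st (t + j), fun j => p.out (t + j)⟩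

end NPath

section Concat

variable {S A : Type*}

theorem pconcat_assoc (p q r : NPath S A) :
    pconcat (pconcat p q) r = pconcat p (pconcat q r) := by
  simp only [pconcat, NPath.mk.injEq]
  refine ⟨Nat.add_assoc _ _ _, ?_, ?_⟩ <;>
  · funext x
    by_cases h1 : x < p.len + q.len <;> by_cases h2 : x < p.len <;>
      by_cases h3 : x - p.len < q.len <;> simp only [h1, h2, h3, if_true, if_false] <;>
      first
      | rfl
      | omega
      | (congr 1; omega)

theorem concatAll_cons (p q : NPath S A) (l : List (NPath S A)) :
    concatAll p (q :: l) = pconcat p (concatAll q l) := by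
  induction l generalizing p q with
  | nil => rfl
  | cons r l ih =>
    show concatAll (pconcat p q) (r :: l) = _
    rw [ih, ih, pconcat_assoc]

theorem PathEq.refl (p : NPath S A) : PathEq p p :=
  ⟨rfl, fun _ _ => rfl, fun _ _ => rfl⟩

theorem PathEq.trans {p q r : NPath S A} (h₁ : PathEq p q) (h₂ : PathEq q r) :
    PathEq p r := by
  obtain ⟨hl₁, hs₁, ho₁⟩ := h₁
  obtain ⟨hl₂, hs₂, ho₂⟩ := h₂
  exact ⟨hl₁.trans hl₂, fun i hi => (hs₁ i hi).trans (hs₂ i (hl₁ ▸ hi)),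
    fun i hi => (ho₁ i hi).trans (ho₂ i (hl₁ ▸ hi))⟩

theorem PathEq.pconcat_left (p : NPath S A) {q q' : NPath S A} (h : PathEq q q') :
    PathEq (pconcat p q) (pconcat p q') := by
  obtain ⟨hl, hs, ho⟩ := h
  refine ⟨by simp [pconcat, hl], ?_, ?_⟩ <;>
  · intro x hx
    simp only [pconcat] at hx ⊢
    split_ifs
    · rfl
    · first
      | exact hs _ (by omega)
      | exact ho _ (by omega)

theorem pathEq_pconcat_take_drop (p : NPath S A) {t : ℕ} (ht : t ≤ p.len) :
    PathEq (pconcat (p.take t) (p.drop t)) p := by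
  refine ⟨by simp [pconcat, NPath.take, NPath.drop]; omega, ?_, ?_⟩ <;>
  · intro x _
    by_cases hx : x < t
    · simp [pconcat, NPath.take, hx]
    · simp only [pconcat, NPath.take, NPath.drop, hx, if_false]
      congr 1; omega

end Concat

section CyclicShift

variable {S A : Type*} {E : Set (S × A × S)} {N : ℕ} {s : ℕ → S} {a : ℕ → A}

theorem apply_mod_eq_of_tailBiting (hs : s 0 = s N) {j : ℕ} (hj : j ≤ N) :
    s (j % N) = s j := by
  rcases hj.lt_or_eq with hj | rfl
  · rw [Nat.mod_eq_of_lt hj]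
  · rw [Nat.mod_self, hs]

theorem IsTBPath.cycShift (h : IsTBPath E N s a) (k : ℕ) :
    IsTBPath E N (cycShiftS N k s) (cycShiftA N k a) := by
  refine ⟨fun l hl => ?_, by simp [cycShiftS]⟩
  have hmod : (l + 1 + k) % N = ((l + k) % N + 1) % N := by
    rw [Nat.mod_add_mod, add_right_comm]
  have hlt : (l + k) % N < N := Nat.mod_lt _ (by omega)
  simp only [cycShiftS, cycShiftA, hmod, apply_mod_eq_of_tailBiting h.2 hlt]
  exact h.1 _ hlt

end CyclicShift

theorem exists_first_return {S : Type*} {s : ℕ → S} {x : S} {n : ℕ} (hn : 0 < n)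
    (hx : s n = x) : ∃ t, 0 < t ∧ t ≤ n ∧ s t = x ∧ ∀ m, 0 < m → m < t → s m ≠ x := by
  classical
  have hex : ∃ t, 0 < t ∧ t ≤ n ∧ s t = x := ⟨n, hn, le_rfl, hx⟩
  obtain ⟨ht0, htn, ht⟩ := Nat.find_spec hex
  exact ⟨Nat.find hex, ht0, htn, ht, fun m hm0 hmt hm =>
    Nat.find_min hex hmt ⟨hm0, hmt.le.trans htn, hm⟩⟩

section Decomposition

variable {S A : Type*} {M : ℕ} {E : Set (S × A × S)} {σ : Fin M → S} {i : Fin M} {N : ℕ}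

theorem inIEE_take {q : NPath S A} {t : ℕ} (ht0 : 0 < t) (htN : t ≤ N)
    (htr : IsTrellisPath E t q.st q.out) (h0 : q.st 0 = σ i) (ht : q.st t = σ i)
    (hfirst : ∀ m, 0 < m → m < t → q.st m ≠ σ i)
    (havoid : ∀ j ≤ t, ∀ i' < i, q.st j ≠ σ i') : InIEE E σ i N (q.take t) := by
  refine ⟨ht0, htN, htr, h0, ht, fun j hj0 hjt i' hi' => ?_⟩
  rcases hi'.lt_or_eq with hi' | rfl
  · exact havoid j hjt.le i' hi'
  · exact hfirst j hj0 hjt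

theorem exists_iee_concat_of_loop (q : NPath S A) (hpos : 0 < q.len) (hle : q.len ≤ N)
    (htr : IsTrellisPath E q.len q.st q.out) (h0 : q.st 0 = σ i) (hend : q.st q.len = σ i)
    (havoid : ∀ j ≤ q.len, ∀ i' < i, q.st j ≠ σ i') :
    ∃ (p : NPath S A) (l : List (NPath S A)),
      (∀ r ∈ p :: l, InIEE E σ i N r) ∧ PathEq (concatAll p l) q := by
  obtain ⟨t, ht0, htq, ht, hfirst⟩ := exists_first_return hpos hend
  have hiee : InIEE E σ i N (q.take t) :=
    inIEE_take ht0 (htq.trans hle) (fun l hl => htr l (by omega)) h0 ht hfirst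
      (fun j hj => havoid j (hj.trans htq))
  rcases htq.lt_or_eq with hlt | rfl
  · obtain ⟨p, l, hall, heq⟩ := exists_iee_concat_of_loop (q.drop t)
      (by simp only [NPath.drop]; omega) (by simp only [NPath.drop]; omega)
      (fun l hl => htr (t + l) (by simp only [NPath.drop] at hl; omega)) ht
      (by simp only [NPath.drop]; rwa [Nat.add_sub_cancel' htq])
      (fun j hj => havoid (t + j) (by simp only [NPath.drop] at hj; omega))
    refine ⟨q.take t, p :: l, List.forall_mem_cons.2 ⟨hiee, hall⟩, ?_⟩
    rw [concatAll_cons]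
    exact (heq.pconcat_left _).trans (pathEq_pconcat_take_drop q htq)
  · exact ⟨q.take q.len, [], by simpa using hiee, PathEq.refl q⟩
termination_by q.len
decreasing_by simp only [NPath.drop]; omega

end Decomposition

/-- Theorem 2: every tail-biting path in `TBP(σᵢ)` can be constructed from the
irreducible error events in `IEE(σᵢ)` via concatenation and cyclic shifting:
there exist `0 ≤ k < N` and a finite nonempty sequence of elements of `IEE(σᵢ)`
whose concatenation equals the cyclic shift of `(s, a)` by `k`. -/
theorem tbp_eq_concat_of_iee {S A : Type*} {M : ℕ}
    (E : Set (S × A × S)) (σ : Fin M → S) (i : Fin M)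
    (N : ℕ) (hN : 1 ≤ N) (s : ℕ → S) (a : ℕ → A)
    (h : InTBP E σ i N s a) :
    ∃ k < N, ∃ (p : NPath S A) (l : List (NPath S A)),
      (∀ q ∈ p :: l, InIEE E σ i N q) ∧
      PathEq (concatAll p l) ⟨N, cycShiftS N k s, cycShiftA N k a⟩ := by
  obtain ⟨htb, ⟨j, hj, hsj⟩, havoid⟩ := h
  have hsk : s (j % N) = σ i := (apply_mod_eq_of_tailBiting htb.2 hj).trans hsj
  have hshift := htb.cycShift (j % N)
  have hstart : cycShiftS N (j % N) s 0 = σ i := by simpa [cycShiftS] using hsk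
  exact ⟨j % N, Nat.mod_lt _ hN, exists_iee_concat_of_loop ⟨N, _, _⟩ hN le_rfl hshift.1
    hstart (hshift.2.symm.trans hstart) fun _ _ => havoid _ (Nat.mod_lt _ hN).le⟩
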